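/- arXiv:2212.03705 — 7 statements merged into one kernel-verified Lean document; each statement's English description precedes it below -/
import Mathlib

section
/- Let A : ℝ → Matrix (Fin n) (Fin n) ℝ be continuous and let F(t,s) solve the forward equation ∂/∂s F(t,s) = F(t,s) A(s), F(t,t) = I. Then F also satisfies the backward equation: ∂/∂t F(t,s) = −A(t) F(t,s) with F(s,s) = I. -/
/-!
Solutions of the linear equation `X' = X A` with `A` continuous are determined by one value
(`A` is bounded on compacts, so the right-hand side is Lipschitz there). Both `u ↦ F(t,u)` and
`u ↦ F(t,s) F(s,u)` solve it and agree at `u = s`, which gives the Chapman–Kolmogorov identity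
`F(t,s) F(s,u) = F(t,u)`; in particular `F(u,s) = F(s,u)⁻¹`. Differentiating the inverse,
`∂/∂u F(u,s) = -F(t,s) (F(s,t) A(t)) F(t,s) = -A(t) F(t,s)` at `u = t`.
-/

open Set

theorem lipschitzWith_mul_right {R : Type*} [NonUnitalSeminormedRing R] (a : R) :
    LipschitzWith ‖a‖₊ (· * a) :=
  LipschitzWith.of_dist_le_mul fun x y => by
    simpa only [dist_eq_norm, ← sub_mul, coe_nnnorm, mul_comm ‖a‖] using norm_mul_le (x - y) a

section NormedAlgebra

variable {R : Type*} [NormedRing R] [NormedAlgebra ℝ R]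

theorem eq_of_hasDerivAt_mul_right {A : ℝ → R} (hA : Continuous A) {X Y : ℝ → R}
    (hX : ∀ u, HasDerivAt X (X u * A u) u) (hY : ∀ u, HasDerivAt Y (Y u * A u) u)
    {s : ℝ} (hs : X s = Y s) : X = Y := by
  funext u
  obtain ⟨a, b, hua, hsa⟩ : ∃ a b : ℝ, u ∈ Ioo a b ∧ s ∈ Ioo a b :=
    ⟨min u s - 1, max u s + 1, by grind, by grind⟩
  obtain ⟨C, hC⟩ := (isCompact_Icc (a := a) (b := b)).exists_bound_of_continuousOn hA.continuousOn
  have hLip : ∀ t ∈ Ioo a b, LipschitzOnWith C.toNNReal (· * A t) univ := fun t ht =>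
    ((lipschitzWith_mul_right (A t)).weaken <|
      (hC t (Ioo_subset_Icc_self ht)).trans (Real.le_coe_toNNReal C)).lipschitzOnWith
  exact ODE_solution_unique_of_mem_Ioo hLip hsa (fun t _ => ⟨hX t, mem_univ _⟩)
    (fun t _ => ⟨hY t, mem_univ _⟩) hs hua

structure IsProductIntegral (A : ℝ → R) (F : ℝ → ℝ → R) : Prop where
  apply_self : ∀ t, F t t = 1
  hasDerivAt_forward : ∀ t s, HasDerivAt (F t) (F t s * A s) s

namespace IsProductIntegral

variable {A : ℝ → R} {F : ℝ → ℝ → R}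

theorem mul_eq (hF : IsProductIntegral A F) (hA : Continuous A) (t s u : ℝ) :
    F t s * F s u = F t u := by
  refine congrFun (eq_of_hasDerivAt_mul_right (X := fun u => F t s * F s u) hA (fun w => ?_)
    (hF.hasDerivAt_forward t) (s := s) ?_) u
  · simpa only [mul_assoc] using (hF.hasDerivAt_forward s w).const_mul (F t s)
  · simp only [hF.apply_self, mul_one]

theorem mul_swap_eq_one (hF : IsProductIntegral A F) (hA : Continuous A) (t s : ℝ) :
    F t s * F s t = 1 := by
  rw [hF.mul_eq hA, hF.apply_self]

def unit (hF : IsProductIntegral A F) (hA : Continuous A) (t s : ℝ) : Rˣ :=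
  ⟨F t s, F s t, hF.mul_swap_eq_one hA t s, hF.mul_swap_eq_one hA s t⟩

theorem inverse_eq (hF : IsProductIntegral A F) (hA : Continuous A) (t s : ℝ) :
    Ring.inverse (F t s) = F s t :=
  Ring.inverse_unit (hF.unit hA t s)

theorem hasDerivAt_backward [HasSummableGeomSeries R] (hF : IsProductIntegral A F)
    (hA : Continuous A) (t s : ℝ) : HasDerivAt (fun u => F u s) (-A t * F t s) t := by
  have hinverse : (fun u => F u s) = fun u => Ring.inverse (F s u) :=
    funext fun u => (hF.inverse_eq hA s u).symm
  have hderiv : -A t * F t s = -(F t s * (F s t * A t) * F t s) := by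
    rw [← mul_assoc, hF.mul_swap_eq_one hA t s, one_mul, neg_mul]
  rw [hinverse, hderiv]
  exact (hasFDerivAt_ringInverse (𝕜 := ℝ) (hF.unit hA s t)).comp_hasDerivAt t
    (hF.hasDerivAt_forward s t)

end IsProductIntegral

end NormedAlgebra

/-- The product integral F(t,s), defined via the forward equation
∂/∂s F(t,s) = F(t,s) A(s) with F(t,t) = I, also satisfies the backward equation
∂/∂t F(t,s) = -A(t) F(t,s) with F(s,s) = I. -/
theorem product_integral_backward (n : ℕ) (A : ℝ → Matrix (Fin n) (Fin n) ℝ)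
    (hA : Continuous A)
    (F : ℝ → ℝ → Matrix (Fin n) (Fin n) ℝ)
    (hinit : ∀ t : ℝ, F t t = 1)
    (hode : ∀ t s : ℝ, ∀ i j : Fin n,
      HasDerivAt (fun u => F t u i j) ((F t s * A s) i j) s) :
    ∀ t s : ℝ, ∀ i j : Fin n,
      HasDerivAt (fun u => F u s i j) ((-(A t) * F t s) i j) t := by
  -- A submultiplicative norm whose topology is the product one, so `hasDerivAt_pi` applies.
  let := Matrix.linftyOpNormedRing (n := Fin n) (α := ℝ)
  let := Matrix.linftyOpNormedAlgebra (n := Fin n) (α := ℝ) (R := ℝ)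
  have hF : IsProductIntegral A F :=
    ⟨hinit, fun t s => hasDerivAt_pi.mpr fun i => hasDerivAt_pi.mpr fun j => hode t s i j⟩
  intro t s i j
  exact hasDerivAt_pi.mp (hasDerivAt_pi.mp (hF.hasDerivAt_backward hA t s) i) j
end

section
/- Let T : ℝ → Matrix (Fin n) (Fin n) ℝ be continuous such that for every x, T(x) is a sub-intensity matrix: off-diagonal entries are nonnegative and each row sum is nonpositive. Let F(t,s) be the product integral of T from t to s (solution of ∂/∂s F = F·T(s), F(t,t)=I). Then all entries of F(t,s) are nonnegative for s ≥ t. -/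
/-!
Each row `v u = F t u i` solves `v' = v T`. With `c` bounding the diagonal of `-T` on `[t, s]`,
`w u = exp (c (u - t)) • v u` solves `w' = w (T + c • 1)`, whose coefficient matrix is entrywise
nonnegative there. For such an equation the total negative part `N` of `w` obeys
`N u ≤ K ∫_t^u N` because `w t ≥ 0`, and Grönwall's inequality forces `N = 0`.
-/

open Matrix Set

theorem IsCompact.exists_nonneg_forall_apply_le {X ι : Type*} [TopologicalSpace X] [Fintype ι]
    {K : Set X} (hK : IsCompact K) {f : ι → X → ℝ} (hf : ∀ i, Continuous (f i)) :
    ∃ C, 0 ≤ C ∧ ∀ x ∈ K, ∀ i, f i x ≤ C := by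
  obtain ⟨C, hC⟩ := hK.exists_bound_of_continuousOn (continuous_pi hf).continuousOn
  refine ⟨max C 0, le_max_right _ _, fun x hx i => ?_⟩
  calc f i x ≤ ‖fun i => f i x‖ := (le_abs_self _).trans (norm_le_pi_norm (fun i => f i x) i)
    _ ≤ max C 0 := (hC x hx).trans (le_max_left _ _)

theorem eq_zero_of_le_mul_integral {f : ℝ → ℝ} {K t s : ℝ} (hf : Continuous f)
    (hf0 : ∀ u ∈ Icc t s, 0 ≤ f u) (hle : ∀ u ∈ Icc t s, f u ≤ K * ∫ x in t..u, f x) :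
    ∀ u ∈ Icc t s, f u = 0 := by
  set Φ : ℝ → ℝ := fun u => ∫ x in t..u, f x
  have hΦ' : ∀ u, HasDerivAt Φ (f u) u := fun u => (hf.integral_hasStrictDerivAt t u).hasDerivAt
  have hΦ0 : ∀ u ∈ Icc t s, 0 ≤ Φ u := fun u hu =>
    intervalIntegral.integral_nonneg hu.1 fun x hx => hf0 x ⟨hx.1, hx.2.trans hu.2⟩
  have hΦ_eq_zero : ∀ u ∈ Icc t s, Φ u = 0 := by
    refine eq_zero_of_abs_deriv_le_mul_abs_self_of_eq_zero_right (K := K)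
      (fun u _ => (hΦ' u).continuousAt.continuousWithinAt) (fun u _ => (hΦ' u).hasDerivWithinAt)
      intervalIntegral.integral_same fun u hu => ?_
    rw [Real.norm_of_nonneg (hf0 u (Ico_subset_Icc_self hu)),
      Real.norm_of_nonneg (hΦ0 u (Ico_subset_Icc_self hu))]
    exact hle u (Ico_subset_Icc_self hu)
  intro u hu
  have hfu := hle u hu
  rw [show (∫ x in t..u, f x) = 0 from hΦ_eq_zero u hu, mul_zero] at hfu
  exact le_antisymm hfu (hf0 u hu)

theorem neg_vecMul_apply_le {ι : Type*} [Fintype ι] {w : ι → ℝ} {M : Matrix ι ι ℝ} {m : ℝ}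
    {j : ι} (hM : ∀ k, 0 ≤ M k j) (hw : ∀ k, -w k ≤ m) : -(w ᵥ* M) j ≤ m * ∑ k, M k j := by
  rw [vecMul_apply_eq_sum, ← Finset.sum_neg_distrib, Finset.mul_sum]
  gcongr with k
  rw [← neg_mul]
  exact mul_le_mul_of_nonneg_right (hw k) (hM k)

section

variable {ι : Type*} [Fintype ι] {v : ℝ → ι → ℝ} {A : ℝ → Matrix ι ι ℝ} {t s : ℝ}

theorem nonneg_of_hasDerivAt_vecMul_of_nonneg (hA : Continuous A)
    (hA0 : ∀ u ∈ Icc t s, ∀ i j, 0 ≤ A u i j)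
    (hv : ∀ u j, HasDerivAt (fun x => v x j) ((v u ᵥ* A u) j) u) (hvt : 0 ≤ v t) :
    ∀ u ∈ Icc t s, 0 ≤ v u := by
  have hvc : ∀ j, Continuous fun u => v u j := fun j =>
    continuous_iff_continuousAt.2 fun u => (hv u j).continuousAt
  set N : ℝ → ℝ := fun u => ∑ j, (v u j)⁻
  have hNc : Continuous N := continuous_finsetSum _ fun j _ => (hvc j).neg.max continuous_const
  have hN0 : ∀ u, 0 ≤ N u := fun u => Finset.sum_nonneg fun j _ => negPart_nonneg _
  have hvN : ∀ u j, -v u j ≤ N u := fun u j =>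
    (neg_le_negPart _).trans (Finset.single_le_sum (fun k _ => negPart_nonneg (v u k))
      (Finset.mem_univ j))
  obtain ⟨C, hC0, hC⟩ := isCompact_Icc.exists_nonneg_forall_apply_le
    (f := fun j u => ∑ k, A u k j) (K := Icc t s) fun j =>
      continuous_finsetSum _ fun k _ => (continuous_apply_apply k j).comp hA
  have hderiv : ∀ u ∈ Icc t s, ∀ j, -(v u ᵥ* A u) j ≤ C * N u := fun u hu j =>
    calc -(v u ᵥ* A u) j ≤ N u * ∑ k, A u k j := neg_vecMul_apply_le (hA0 u hu · j) (hvN u)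
      _ ≤ C * N u := by rw [mul_comm]; exact mul_le_mul_of_nonneg_right (hC u hu j) (hN0 u)
  have hneg : ∀ u ∈ Icc t s, ∀ j, -v u j ≤ C * ∫ x in t..u, N x := by
    intro u hu j
    have := intervalIntegral.integral_le_sub_of_hasDeriv_right_of_le hu.1
      (hvc j).continuousOn (fun x _ => (hv x j).hasDerivWithinAt)
      (φ := fun x => -(C * N x)) (by fun_prop : Continuous fun x => -(C * N x)).integrableOn_Icc
      (fun x hx => neg_le.1 (hderiv x ⟨hx.1.le, hx.2.le.trans hu.2⟩ j))
    rw [intervalIntegral.integral_neg, intervalIntegral.integral_const_mul] at this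
    linarith [show 0 ≤ v t j from hvt j]
  have hN_eq_zero := eq_zero_of_le_mul_integral hNc (fun u _ => hN0 u) fun u hu =>
    calc N u ≤ ∑ _j : ι, C * ∫ x in t..u, N x := Finset.sum_le_sum fun j _ =>
          max_le (hneg u hu j) (mul_nonneg hC0 (intervalIntegral.integral_nonneg hu.1
            fun x _ => hN0 x))
      _ = Fintype.card ι * C * ∫ x in t..u, N x := by simp [mul_assoc]
  intro u hu j
  simpa [hN_eq_zero u hu] using hvN u j

theorem hasDerivAt_exp_mul_vecMul_add_smul_one [DecidableEq ι] {u : ℝ} {j : ι} (c : ℝ)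
    (hv : HasDerivAt (fun x => v x j) ((v u ᵥ* A u) j) u) :
    HasDerivAt (fun x => Real.exp (c * (x - t)) * v x j)
      (((Real.exp (c * (u - t)) • v u) ᵥ* (A u + c • 1)) j) u := by
  have hexp : HasDerivAt (fun x => Real.exp (c * (x - t))) (Real.exp (c * (u - t)) * c) u := by
    simpa using (((hasDerivAt_id u).sub_const t).const_mul c).exp
  refine (hexp.mul hv).congr_deriv ?_
  simp only [vecMul_add, vecMul_smul, vecMul_one, smul_vecMul, Pi.add_apply, Pi.smul_apply,
    smul_eq_mul]
  ring

theorem nonneg_of_hasDerivAt_vecMul_of_offDiag_nonneg [DecidableEq ι] (hA : Continuous A)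
    (hA0 : ∀ u ∈ Icc t s, ∀ i j, i ≠ j → 0 ≤ A u i j)
    (hv : ∀ u j, HasDerivAt (fun x => v x j) ((v u ᵥ* A u) j) u) (hvt : 0 ≤ v t) :
    ∀ u ∈ Icc t s, 0 ≤ v u := by
  obtain ⟨c, -, hc⟩ := isCompact_Icc.exists_nonneg_forall_apply_le
    (f := fun j u => -A u j j) (K := Icc t s) fun j => ((continuous_apply_apply j j).comp hA).neg
  have hB0 : ∀ u ∈ Icc t s, ∀ i j, 0 ≤ (A u + c • 1) i j := by
    intro u hu i j
    rcases eq_or_ne i j with rfl | hij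
    · simp only [Matrix.add_apply, Matrix.smul_apply, one_apply_eq, smul_eq_mul, mul_one]
      linarith [hc u hu i]
    · simpa [one_apply_ne hij] using hA0 u hu i j hij
  have hw := nonneg_of_hasDerivAt_vecMul_of_nonneg (t := t)
    (v := fun x => Real.exp (c * (x - t)) • v x)
    (hA.add continuous_const) hB0 (fun u j => hasDerivAt_exp_mul_vecMul_add_smul_one c (hv u j))
    (by simpa using hvt)
  intro u hu j
  exact (mul_nonneg_iff_of_pos_left (Real.exp_pos _)).1 (hw u hu j)

end

theorem product_integral_nonneg_general (n : ℕ) (T : ℝ → Matrix (Fin n) (Fin n) ℝ)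
    (hTc : Continuous T)
    (hoff : ∀ x : ℝ, ∀ i j : Fin n, i ≠ j → 0 ≤ T x i j)
    (F : ℝ → ℝ → Matrix (Fin n) (Fin n) ℝ)
    (hinit : ∀ t : ℝ, F t t = 1)
    (hode : ∀ t s : ℝ, ∀ i j : Fin n,
      HasDerivAt (fun u => F t u i j) ((F t s * T s) i j) s) :
    ∀ t s : ℝ, t ≤ s → ∀ i j : Fin n, 0 ≤ F t s i j := by
  intro t s hts i
  have hrow_init : 0 ≤ F t t i := fun k => by
    rw [hinit, one_apply]
    split_ifs <;> norm_num
  exact nonneg_of_hasDerivAt_vecMul_of_offDiag_nonneg hTc (fun u _ => hoff u)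
    (fun u k => hode t u i k) hrow_init s ⟨hts, le_rfl⟩

/-- The product integral of a continuous sub-intensity matrix function has
nonnegative entries for s ≥ t. -/
theorem product_integral_nonneg (n : ℕ) (T : ℝ → Matrix (Fin n) (Fin n) ℝ)
    (hTc : Continuous T)
    (hoff : ∀ x : ℝ, ∀ i j : Fin n, i ≠ j → 0 ≤ T x i j)
    (hrow : ∀ x : ℝ, ∀ i : Fin n, ∑ j, T x i j ≤ 0)
    (F : ℝ → ℝ → Matrix (Fin n) (Fin n) ℝ)
    (hinit : ∀ t : ℝ, F t t = 1)
    (hode : ∀ t s : ℝ, ∀ i j : Fin n,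
      HasDerivAt (fun u => F t u i j) ((F t s * T s) i j) s) :
    ∀ t s : ℝ, t ≤ s → ∀ i j : Fin n, 0 ≤ F t s i j :=
  product_integral_nonneg_general n T hTc hoff F hinit hode
end

section
/- Let T : ℝ → Matrix (Fin n) (Fin n) ℝ be continuous with each T(x) a sub-intensity matrix, and let F(t,s) be the product integral of T. Then for all s ≥ t and every row i, the row sums of F(t,s) are at most 1, i.e. (F(t,s) · 1)_i ≤ 1, where 1 is the all-ones column vector; moreover they are nonnegative. -/
/-!
A row `x` of `F(t, ·)` solves `x' = x T` with `T` Metzler. Such a flow preserves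
nonnegativity: against the barrier `-ε e^{K (u - t)}`, a coordinate touching it has derivative
at least `-(card · C) ε e^{K (u - t)}` (off-diagonal entries only push up, the diagonal one
multiplies the touching value), which beats the barrier's slope once `K > card · C`; then
`ε → 0`. Once `F ≥ 0`, the row sums have derivative `F (T 1) ≤ 0`, so they decrease from 1.
-/

open Matrix Filter Set Topology

lemma eventually_pos_nhdsGT_of_hasDerivWithinAt {g : ℝ → ℝ} {g' x : ℝ}
    (hg : HasDerivWithinAt g g' (Ici x) x) (hx : 0 ≤ g x) (hg' : g x = 0 → 0 < g') :
    ∀ᶠ z in 𝓝[>] x, 0 < g z := by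
  rcases hx.lt_or_eq with hpos | hzero
  · exact ((hg.continuousWithinAt.mono Ioi_subset_Ici_self).eventually (eventually_gt_nhds hpos))
  have hslope := (hasDerivWithinAt_iff_tendsto_slope' (lt_irrefl x)).1 hg.Ioi_of_Ici
  filter_upwards [hslope.eventually (eventually_gt_nhds (hg' hzero.symm)), self_mem_nhdsWithin]
    with z hz hxz
  rw [slope_def_field, ← hzero, sub_zero] at hz
  exact (div_pos_iff_of_pos_right (sub_pos.2 hxz)).1 hz

section MetzlerFlow

variable {ι : Type*} [Fintype ι]

lemma neg_card_mul_le_vecMul_apply {A : Matrix ι ι ℝ} {v : ι → ℝ} {β C : ℝ} {k : ι}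
    (hβ : 0 ≤ β) (hv : ∀ m, -β ≤ v m) (hvk : v k = -β)
    (hA : ∀ m, m ≠ k → 0 ≤ A m k) (hC : ∀ m, A m k ≤ C) :
    -(Fintype.card ι * C * β) ≤ (v ᵥ* A) k := by
  have hterm : ∀ m, -(C * β) ≤ v m * A m k := by
    intro m
    by_cases hm : m = k
    · subst hm; rw [hvk]; nlinarith [hC m]
    · nlinarith [hv m, hA m hm, hC m]
  calc -(Fintype.card ι * C * β) = ∑ _m : ι, -(C * β) := by simp; ring
    _ ≤ ∑ m, v m * A m k := Finset.sum_le_sum fun m _ => hterm m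
    _ = (v ᵥ* A) k := rfl

variable {A : ℝ → Matrix ι ι ℝ} {x : ℝ → ι → ℝ} {a b : ℝ}

lemma neg_mul_exp_le_of_hasDerivWithinAt_vecMul {C ε : ℝ} (hε : 0 < ε)
    (hA : ∀ u ∈ Ico a b, ∀ m k, m ≠ k → 0 ≤ A u m k) (hC : ∀ u ∈ Ico a b, ∀ m k, A u m k ≤ C)
    (hx : ContinuousOn x (Icc a b))
    (hx' : ∀ u ∈ Ico a b, ∀ k, HasDerivWithinAt (fun v => x v k) ((x u ᵥ* A u) k) (Ici u) u)
    (hxa : 0 ≤ x a) :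
    ∀ u ∈ Icc a b, ∀ k, -(ε * Real.exp ((Fintype.card ι * C + 1) * (u - a))) ≤ x u k := by
  set K : ℝ := Fintype.card ι * C + 1
  set β : ℝ → ℝ := fun u => ε * Real.exp (K * (u - a))
  have hβ_pos : ∀ u, 0 < β u := fun u => mul_pos hε (Real.exp_pos _)
  have hβ' : ∀ u, HasDerivAt β (K * β u) u := fun u => by
    simpa [β, mul_comm, mul_left_comm] using
      (((hasDerivAt_id u).sub_const a).const_mul K).exp.const_mul ε
  let S : Set ℝ := {u | ∀ k, -β u ≤ x u k}
  have hS_closed : IsClosed (S ∩ Icc a b) := by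
    have : S ∩ Icc a b = {u ∈ Icc a b | Function.const ι (-β u) ≤ x u} := by
      ext u; simp [S, Pi.le_def, and_comm]
    rw [this]
    exact isClosed_Icc.isClosed_le (by fun_prop) hx
  refine fun w hw => IsClosed.Icc_subset_of_forall_mem_nhdsWithin hS_closed
    (fun k => (neg_nonpos.2 (hβ_pos a).le).trans (hxa k)) ?_ hw
  rintro u ⟨hu, huI⟩
  refine Filter.eventually_all.2 fun k => ?_
  have hcontact : x u k + β u = 0 → 0 < (x u ᵥ* A u) k + K * β u := fun h0 => by
    have := neg_card_mul_le_vecMul_apply (hβ_pos u).le hu (by linarith) (hA u huI · k)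
      (hC u huI · k)
    have hK : K * β u = Fintype.card ι * C * β u + β u := by ring
    linarith [hβ_pos u]
  filter_upwards [eventually_pos_nhdsGT_of_hasDerivWithinAt
    ((hx' u huI k).fun_add (hβ' u).hasDerivWithinAt) (by linarith [hu k]) hcontact] with v hv
  linarith

lemma nonneg_of_hasDerivWithinAt_vecMul {C : ℝ}
    (hA : ∀ u ∈ Ico a b, ∀ m k, m ≠ k → 0 ≤ A u m k) (hC : ∀ u ∈ Ico a b, ∀ m k, A u m k ≤ C)
    (hx : ContinuousOn x (Icc a b))
    (hx' : ∀ u ∈ Ico a b, ∀ k, HasDerivWithinAt (fun v => x v k) ((x u ᵥ* A u) k) (Ici u) u)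
    (hxa : 0 ≤ x a) :
    ∀ u ∈ Icc a b, 0 ≤ x u := by
  intro u hu k
  refine le_of_forall_sub_le fun ε hε => ?_
  have := neg_mul_exp_le_of_hasDerivWithinAt_vecMul
    (mul_pos hε (Real.exp_pos (-((Fintype.card ι * C + 1) * (u - a))))) hA hC hx hx' hxa u hu k
  rwa [mul_assoc, ← Real.exp_add, neg_add_cancel, Real.exp_zero, mul_one, ← zero_sub] at this

lemma sum_le_sum_of_hasDerivWithinAt_vecMul
    (hA : ∀ u ∈ Ico a b, ∀ m, ∑ k, A u m k ≤ 0) (hx₀ : ∀ u ∈ Ico a b, 0 ≤ x u)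
    (hx : ContinuousOn x (Icc a b))
    (hx' : ∀ u ∈ Ico a b, ∀ k, HasDerivWithinAt (fun v => x v k) ((x u ᵥ* A u) k) (Ici u) u) :
    ∀ u ∈ Icc a b, ∑ k, x u k ≤ ∑ k, x a k := by
  refine image_le_of_deriv_right_le_deriv_boundary (B := fun _ => ∑ k, x a k) (B' := 0)
    (continuousOn_finsetSum _ fun k _ => continuousOn_pi.1 hx k)
    (fun u hu => HasDerivWithinAt.fun_sum fun k _ => hx' u hu k) le_rfl continuousOn_const
    (fun u _ => hasDerivWithinAt_const _ _ _) fun u hu => ?_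
  calc ∑ k, (x u ᵥ* A u) k = x u ⬝ᵥ (A u *ᵥ 1) := by
        rw [dotProduct_mulVec, dotProduct_one]
    _ ≤ 0 := Finset.sum_nonpos fun m _ =>
        mul_nonpos_of_nonneg_of_nonpos (hx₀ u hu m) (by simpa [mulVec, dotProduct] using hA u hu m)

end MetzlerFlow

section

attribute [local instance] Matrix.seminormedAddCommGroup

lemma exists_forall_apply_le_of_continuousOn_Icc {m n : Type*} [Fintype m] [Fintype n]
    {A : ℝ → Matrix m n ℝ} {a b : ℝ} (hA : ContinuousOn A (Icc a b)) :
    ∃ C, ∀ u ∈ Icc a b, ∀ i j, A u i j ≤ C := by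
  obtain ⟨C, hC⟩ := isCompact_Icc.exists_bound_of_continuousOn hA
  exact ⟨C, fun u hu i j => (Real.le_norm_self _).trans
    ((norm_entry_le_entrywise_sup_norm _).trans (hC u hu))⟩

end

/-- For the product integral of a continuous sub-intensity matrix function,
each row sum lies in [0, 1] for s ≥ t. -/
theorem product_integral_rowsum_le_one (n : ℕ) (T : ℝ → Matrix (Fin n) (Fin n) ℝ)
    (hTc : Continuous T)
    (hoff : ∀ x : ℝ, ∀ i j : Fin n, i ≠ j → 0 ≤ T x i j)
    (hrow : ∀ x : ℝ, ∀ i : Fin n, ∑ j, T x i j ≤ 0)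
    (F : ℝ → ℝ → Matrix (Fin n) (Fin n) ℝ)
    (hinit : ∀ t : ℝ, F t t = 1)
    (hode : ∀ t s : ℝ, ∀ i j : Fin n,
      HasDerivAt (fun u => F t u i j) ((F t s * T s) i j) s) :
    ∀ t s : ℝ, t ≤ s → ∀ i : Fin n,
      (F t s *ᵥ fun _ => (1 : ℝ)) i ≤ 1 ∧ 0 ≤ (F t s *ᵥ fun _ => (1 : ℝ)) i := by
  intro t s hts i
  obtain ⟨C, hC⟩ := exists_forall_apply_le_of_continuousOn_Icc (a := t) (b := s) hTc.continuousOn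
  have hcont : ContinuousOn (fun u => F t u i) (Icc t s) :=
    (continuous_pi fun j => continuous_iff_continuousAt.2 fun u =>
      (hode t u i j).continuousAt).continuousOn
  have hderiv : ∀ u ∈ Ico t s, ∀ k,
      HasDerivWithinAt (fun v => F t v i k) ((F t u i ᵥ* T u) k) (Ici u) u :=
    fun u _ k => (hode t u i k).hasDerivWithinAt
  have hnonneg : ∀ u ∈ Icc t s, 0 ≤ F t u i :=
    nonneg_of_hasDerivWithinAt_vecMul (fun u _ => hoff u)
      (fun u hu => hC u (Ico_subset_Icc_self hu)) hcont hderiv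
      (by simp [hinit, Pi.le_def, one_apply, apply_ite])
  have hsum := sum_le_sum_of_hasDerivWithinAt_vecMul (fun u _ => hrow u)
    (fun u hu => hnonneg u (Ico_subset_Icc_self hu)) hcont hderiv s (right_mem_Icc.2 hts)
  have hrowsum : (F t s *ᵥ fun _ => (1 : ℝ)) i = ∑ j, F t s i j := by simp [mulVec, dotProduct]
  rw [hrowsum]
  exact ⟨hsum.trans (by simp [hinit, one_apply]),
    Finset.sum_nonneg fun j _ => hnonneg s (right_mem_Icc.2 hts) j⟩
end

section
/- Let M : ℝ → Matrix (Fin n) (Fin n) ℝ be continuous with each M(x) a proper intensity matrix (off-diagonal entries nonnegative, row sums zero), and let P(t,s) be the product integral of M. Then P(t,s) is a stochastic matrix for all s ≥ t: all entries nonnegative and each row sums to exactly 1. -/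
/-!
Row sums of `P(t, ·)` are constant because `(P M) 𝟙 = P (M 𝟙) = 0`. For nonnegativity, let `C`
bound the entries of `M` on `[t, s]`: then `e^{Cu} P(t, u)` solves the forward equation for the
entrywise nonnegative generator `M + C`, and a solution of such an equation cannot leave the
nonnegative orthant. Indeed, after adding a small barrier `ε e^{(L+1)u}`, where `L` bounds the
column sums of the generator, the derivative of an entry at the first time it reaches zero would
be positive.
-/

open Matrix Filter Set Topology

theorem rowSum_eq_of_hasDerivAt_mul {m ι : Type*} [Fintype ι]
    {P : ℝ → Matrix m ι ℝ} {M : ℝ → Matrix ι ι ℝ}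
    (hP : ∀ u i j, HasDerivAt (fun v => P v i j) ((P u * M u) i j) u)
    (hM : ∀ u k, ∑ j, M u k j = 0) (i : m) (s t : ℝ) : ∑ j, P s i j = ∑ j, P t i j := by
  have hderiv : ∀ u, HasDerivAt (fun v => ∑ j, P v i j) 0 u := fun u => by
    have hsum : ∑ j, (P u * M u) i j = 0 := by
      simp only [Matrix.mul_apply]
      rw [Finset.sum_comm]
      simp [← Finset.mul_sum, hM]
    exact hsum ▸ HasDerivAt.fun_sum fun j _ => hP u i j
  exact is_const_of_deriv_eq_zero (fun u => (hderiv u).differentiableAt)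
    (fun u => (hderiv u).deriv) s t

theorem HasDerivWithinAt.eventually_lt_of_pos {f : ℝ → ℝ} {f' x : ℝ}
    (hf : HasDerivWithinAt f f' (Ioi x) x) (hf' : 0 < f') : ∀ᶠ y in 𝓝[>] x, f x < f y := by
  filter_upwards [((hasDerivWithinAt_iff_tendsto_slope' self_notMem_Ioi).1 hf).eventually
    (lt_mem_nhds hf'), self_mem_nhdsWithin] with y hslope hxy
  rw [slope_def_field] at hslope
  exact sub_pos.1 ((div_pos_iff_of_pos_right (sub_pos.2 hxy)).1 hslope)

theorem nonneg_on_Icc_of_hasDerivWithinAt_pos_of_eq_zero {ι : Type*} [Finite ι]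
    {f f' : ι → ℝ → ℝ} {a b : ℝ} (hcont : ∀ i, ContinuousOn (f i) (Icc a b))
    (hderiv : ∀ i, ∀ u ∈ Ico a b, HasDerivWithinAt (f i) (f' i u) (Ioi u) u)
    (ha : ∀ i, 0 ≤ f i a)
    (hzero : ∀ u ∈ Ico a b, (∀ j, 0 ≤ f j u) → ∀ i, f i u = 0 → 0 < f' i u) :
    ∀ u ∈ Icc a b, ∀ i, 0 ≤ f i u := by
  let s : Set ℝ := {u | 0 ≤ fun i => f i u}
  have hclosed : IsClosed (s ∩ Icc a b) := by
    rw [inter_comm]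
    exact (continuousOn_pi.2 hcont).preimage_isClosed_of_isClosed isClosed_Icc isClosed_Ici
  have hstep : ∀ u ∈ s ∩ Ico a b, s ∈ 𝓝[>] u := by
    rintro u ⟨hu, hu_mem⟩
    refine eventually_all.2 fun i => ?_
    rcases (hu i).eq_or_lt with hi | hi
    · filter_upwards [(hderiv i u hu_mem).eventually_lt_of_pos (hzero u hu_mem hu i hi.symm)]
        with v hv using hi ▸ hv.le
    · filter_upwards [(hderiv i u hu_mem).continuousWithinAt.eventually (lt_mem_nhds hi)]
        with v hv using hv.le
  exact fun u hu => hclosed.Icc_subset_of_forall_mem_nhdsWithin ha hstep hu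

theorem nonneg_of_hasDerivWithinAt_mul_of_nonneg {m ι : Type*} [Finite m] [Fintype ι]
    {Q : ℝ → Matrix m ι ℝ} {A : ℝ → Matrix ι ι ℝ} {a b L : ℝ}
    (hQc : ∀ i j, ContinuousOn (fun u => Q u i j) (Icc a b))
    (hQ : ∀ i j, ∀ u ∈ Ico a b, HasDerivWithinAt (fun u => Q u i j) ((Q u * A u) i j) (Ioi u) u)
    (hA : ∀ u ∈ Ico a b, ∀ k j, 0 ≤ A u k j) (hL : ∀ u ∈ Ico a b, ∀ j, ∑ k, A u k j ≤ L)
    (ha : ∀ i j, 0 ≤ Q a i j) : ∀ u ∈ Icc a b, ∀ i j, 0 ≤ Q u i j := by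
  let E : ℝ → ℝ := fun u => Real.exp ((L + 1) * u)
  have hE : ∀ u, HasDerivAt E ((L + 1) * E u) u := fun u => by
    simpa [E, mul_comm] using ((hasDerivAt_id u).const_mul (L + 1)).exp
  have hperturbed : ∀ ε > 0, ∀ u ∈ Icc a b, ∀ i j, 0 ≤ Q u i j + ε * E u := by
    intro ε hε
    have hεE : ∀ u, 0 < ε * E u := fun u => mul_pos hε (Real.exp_pos _)
    -- At a first zero of an entry, `Q A ≥ -ε E L` entrywise, which the barrier's growth beats.
    have hzero : ∀ u ∈ Ico a b, (∀ i j, 0 ≤ Q u i j + ε * E u) → ∀ i j,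
        0 < (Q u * A u) i j + ε * ((L + 1) * E u) := by
      intro u hu hnonneg i j
      have hlower : -(ε * E u) * L ≤ (Q u * A u) i j :=
        calc -(ε * E u) * L
            ≤ -(ε * E u) * ∑ k, A u k j :=
              mul_le_mul_of_nonpos_left (hL u hu j) (neg_nonpos.2 (hεE u).le)
          _ = ∑ k, -(ε * E u) * A u k j := Finset.mul_sum _ _ _
          _ ≤ ∑ k, Q u i k * A u k j := Finset.sum_le_sum fun k _ =>
              mul_le_mul_of_nonneg_right (by linarith [hnonneg i k]) (hA u hu k j)
      linarith [hεE u]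
    have := nonneg_on_Icc_of_hasDerivWithinAt_pos_of_eq_zero (ι := m × ι)
      (f := fun p u => Q u p.1 p.2 + ε * E u)
      (f' := fun p u => (Q u * A u) p.1 p.2 + ε * ((L + 1) * E u))
      (fun p => (hQc p.1 p.2).add (continuousOn_const.mul (by fun_prop)))
      (fun p u hu => (hQ p.1 p.2 u hu).add ((hE u).hasDerivWithinAt.const_mul ε))
      (fun p => add_nonneg (ha p.1 p.2) (hεE a).le)
      (fun u hu hnonneg p _ => hzero u hu (fun i j => hnonneg (i, j)) p.1 p.2)
    exact fun u hu i j => this u hu (i, j)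
  intro u hu i j
  have hlim : Tendsto (fun ε => Q u i j + ε * E u) (𝓝[>] 0) (𝓝 (Q u i j)) := by
    simpa using ((continuous_id.mul continuous_const).const_add (Q u i j)).tendsto 0
      |>.mono_left nhdsWithin_le_nhds
  exact ge_of_tendsto hlim (eventually_nhdsWithin_of_forall fun ε hε => hperturbed ε hε u hu i j)

theorem IsCompact.exists_abs_entry_le_of_continuousOn {X m ι : Type*} [TopologicalSpace X]
    [Fintype m] [Fintype ι] {K : Set X} (hK : IsCompact K) {M : X → Matrix m ι ℝ}
    (hM : ContinuousOn M K) : ∃ C, ∀ x ∈ K, ∀ i j, |M x i j| ≤ C := by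
  let _ := Matrix.normedAddCommGroup (m := m) (n := ι) (α := ℝ)
  obtain ⟨C, hC⟩ := hK.exists_bound_of_continuousOn hM
  exact ⟨C, fun x hx i j => (norm_entry_le_entrywise_sup_norm (M x)).trans (hC x hx)⟩

theorem hasDerivAt_exp_smul_apply {m ι : Type*} [Fintype ι] [DecidableEq ι]
    {P : ℝ → Matrix m ι ℝ} {M : Matrix ι ι ℝ} {c u : ℝ}
    (hP : ∀ i j, HasDerivAt (fun v => P v i j) ((P u * M) i j) u) (i : m) (j : ι) :
    HasDerivAt (fun v => (Real.exp (c * v) • P v) i j)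
      ((Real.exp (c * u) • P u * (M + c • (1 : Matrix ι ι ℝ))) i j) u := by
  have hexp : HasDerivAt (fun v => Real.exp (c * v)) (Real.exp (c * u) * c) u := by
    simpa using ((hasDerivAt_id u).const_mul c).exp
  refine (hexp.fun_mul (hP i j)).congr_deriv ?_
  simp only [Matrix.smul_mul, Matrix.mul_add, Matrix.mul_smul, Matrix.mul_one, Matrix.smul_apply,
    Matrix.add_apply, smul_eq_mul]
  ring

theorem nonneg_of_hasDerivAt_mul_of_offDiag_nonneg {m ι : Type*} [Finite m] [Fintype ι]
    {P : ℝ → Matrix m ι ℝ} {M : ℝ → Matrix ι ι ℝ} {a b : ℝ} (hMc : ContinuousOn M (Icc a b))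
    (hoff : ∀ u ∈ Icc a b, ∀ k j, k ≠ j → 0 ≤ M u k j)
    (hP : ∀ u ∈ Icc a b, ∀ i j, HasDerivAt (fun v => P v i j) ((P u * M u) i j) u)
    (ha : ∀ i j, 0 ≤ P a i j) : ∀ u ∈ Icc a b, ∀ i j, 0 ≤ P u i j := by
  classical
  obtain ⟨C, hC⟩ := isCompact_Icc.exists_abs_entry_le_of_continuousOn hMc
  -- `e^{Cu} P(u)` solves the forward equation for the entrywise nonnegative generator `M + C`.
  let A : ℝ → Matrix ι ι ℝ := fun u => M u + C • 1
  have hA_apply : ∀ u k j, A u k j = M u k j + if k = j then C else 0 := by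
    simp [A, Matrix.one_apply]
  have hA : ∀ u ∈ Icc a b, ∀ k j, 0 ≤ A u k j := by
    intro u hu k j
    rw [hA_apply]
    split_ifs with hkj
    · linarith [neg_le_of_abs_le (hC u hu k j)]
    · simpa using hoff u hu k j hkj
  have hAle : ∀ u ∈ Icc a b, ∀ k j, A u k j ≤ 2 * C := by
    intro u hu k j
    rw [hA_apply]
    have hC0 := (abs_nonneg (M u k j)).trans (hC u hu k j)
    split_ifs <;> linarith [(le_abs_self (M u k j)).trans (hC u hu k j)]
  have hscaled := nonneg_of_hasDerivWithinAt_mul_of_nonneg (Q := fun u => Real.exp (C * u) • P u)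
    (A := A) (a := a) (b := b) (L := ∑ _k : ι, 2 * C)
    (fun i j u hu => (hasDerivAt_exp_smul_apply (hP u hu) i j).continuousAt.continuousWithinAt)
    (fun i j u hu =>
      (hasDerivAt_exp_smul_apply (hP u (Ico_subset_Icc_self hu)) i j).hasDerivWithinAt)
    (fun u hu => hA u (Ico_subset_Icc_self hu))
    (fun u hu j => Finset.sum_le_sum fun k _ => hAle u (Ico_subset_Icc_self hu) k j)
    (fun i j => mul_nonneg (Real.exp_pos _).le (ha i j))
  exact fun u hu i j => nonneg_of_mul_nonneg_right (hscaled u hu i j) (Real.exp_pos _)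

/-- The product integral of a continuous (proper) intensity matrix function is a
stochastic matrix for s ≥ t: nonnegative entries and row sums exactly 1. -/
theorem product_integral_stochastic (n : ℕ) (M : ℝ → Matrix (Fin n) (Fin n) ℝ)
    (hMc : Continuous M)
    (hoff : ∀ x : ℝ, ∀ i j : Fin n, i ≠ j → 0 ≤ M x i j)
    (hrow : ∀ x : ℝ, ∀ i : Fin n, ∑ j, M x i j = 0)
    (P : ℝ → ℝ → Matrix (Fin n) (Fin n) ℝ)
    (hinit : ∀ t : ℝ, P t t = 1)
    (hode : ∀ t s : ℝ, ∀ i j : Fin n,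
      HasDerivAt (fun u => P t u i j) ((P t s * M s) i j) s) :
    ∀ t s : ℝ, t ≤ s → (∀ i j : Fin n, 0 ≤ P t s i j) ∧ ∀ i : Fin n, ∑ j, P t s i j = 1 := by
  intro t s hts
  have hinit_nonneg : ∀ i j, 0 ≤ P t t i j := fun i j => by
    rw [hinit, Matrix.one_apply]
    split_ifs <;> norm_num
  refine ⟨nonneg_of_hasDerivAt_mul_of_offDiag_nonneg hMc.continuousOn (fun u _ => hoff u)
    (fun u _ => hode t u) hinit_nonneg s ⟨hts, le_rfl⟩, fun i => ?_⟩
  rw [rowSum_eq_of_hasDerivAt_mul (hode t) hrow i s t, hinit]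
  simp [Matrix.one_apply]
end

section
/- Let τ be a random variable with survival function P(τ > x) = π · F(0,x) · 1 where π is a probability row vector on Fin n, F(t,s) is the product integral of a continuous sub-intensity matrix function T, and 1 is the all-ones vector. Then for s, t ≥ 0 with π·F(0,s)·1 > 0, the conditional survival function satisfies P(τ > s + t | τ > s) = α(s) · F(s, s+t) · 1, where α(s) = (π·F(0,s)) / (π·F(0,s)·1). In particular, the overshoot τ − s given τ > s has survival function x ↦ α(s)·F(s,s+x)·1, i.e. is again of inhomogeneous phase-type with representation (α(s), T(s+·)). -/
/-!
Conditioning on `τ > s` divides the survival function by `π F(0,s) 1`, so the claim reduces to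
the semigroup identity `F(0,s) F(s,s+t) = F(0,s+t)`. Both sides solve the linear equation
`X' = X T(u)` on `[s, s+t]` with the same value `F(0,s)` at `u = s`, and this equation has unique
solutions because `X ↦ X T(u)` is Lipschitz with constant `sup_{[s,s+t]} ‖T‖`.
-/

open Matrix MeasureTheory ProbabilityTheory Set

section ProductIntegral

variable {A : Type*} [NormedRing A] [NormedAlgebra ℝ A]

theorem eqOn_Icc_of_hasDerivAt_mul_right {T f g : ℝ → A} {a b : ℝ}
    (hT : ContinuousOn T (Icc a b))
    (hf : ∀ u ∈ Icc a b, HasDerivAt f (f u * T u) u)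
    (hg : ∀ u ∈ Icc a b, HasDerivAt g (g u * T u) u)
    (ha : f a = g a) : EqOn f g (Icc a b) := by
  obtain ⟨C, hC⟩ := isCompact_Icc.exists_bound_of_continuousOn hT
  have hlip : ∀ u ∈ Ico a b, LipschitzOnWith C.toNNReal (· * T u) univ := by
    refine fun u hu => (LipschitzWith.of_dist_le_mul fun X Y => ?_).lipschitzOnWith
    calc dist (X * T u) (Y * T u) = ‖(X - Y) * T u‖ := by rw [dist_eq_norm, sub_mul]
      _ ≤ ‖X - Y‖ * ‖T u‖ := norm_mul_le _ _
      _ ≤ C.toNNReal * dist X Y := by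
          rw [mul_comm, ← dist_eq_norm, Real.coe_toNNReal']
          gcongr
          exact (hC u (Ico_subset_Icc_self hu)).trans (le_max_left _ _)
  have hcont : ∀ h : ℝ → A, (∀ u ∈ Icc a b, HasDerivAt h (h u * T u) u) →
      ContinuousOn h (Icc a b) :=
    fun h hh u hu => (hh u hu).continuousAt.continuousWithinAt
  exact ODE_solution_unique_of_mem_Icc_right hlip (hcont f hf)
    (fun u hu => (hf u (Ico_subset_Icc_self hu)).hasDerivWithinAt) (fun _ _ => trivial)
    (hcont g hg) (fun u hu => (hg u (Ico_subset_Icc_self hu)).hasDerivWithinAt)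
    (fun _ _ => trivial) ha

theorem mul_eq_of_hasDerivAt_mul_right {T : ℝ → A} (hT : Continuous T) {F : ℝ → ℝ → A}
    (hF_self : ∀ t, F t t = 1) (hF : ∀ t u, HasDerivAt (F t) (F t u * T u) u)
    (r s b : ℝ) (hsb : s ≤ b) : F r s * F s b = F r b := by
  have hprod : ∀ u, HasDerivAt (F r s * F s ·) (F r s * F s u * T u) u := fun u => by
    simpa only [mul_assoc] using (hF s u).const_mul (F r s)
  refine eqOn_Icc_of_hasDerivAt_mul_right hT.continuousOn (fun u _ => hprod u)
    (fun u _ => hF r u) ?_ (right_mem_Icc.2 hsb)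
  rw [hF_self, mul_one]

end ProductIntegral

namespace Matrix

section

attribute [local instance] Matrix.linftyOpNormedAddCommGroup Matrix.linftyOpNormedSpace

variable {m n : Type*} [Fintype m] [Fintype n]

theorem hasDerivAt_of_forall_hasDerivAt_apply {M : ℝ → Matrix m n ℝ} {M' : Matrix m n ℝ}
    {x : ℝ} (h : ∀ i j, HasDerivAt (fun u => M u i j) (M' i j) x) : HasDerivAt M M' x := by
  have hpi : HasDerivAt (fun u => (ofLinearEquiv ℝ).symm (M u)) ((ofLinearEquiv ℝ).symm M') x :=
    hasDerivAt_pi.2 fun i => hasDerivAt_pi.2 (h i)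
  exact (ofLinearEquiv ℝ).toContinuousLinearEquiv.hasFDerivAt.comp_hasDerivAt x hpi

end

section

attribute [local instance] Matrix.linftyOpNormedRing Matrix.linftyOpNormedAlgebra

variable {n : Type*} [Fintype n] [DecidableEq n]

theorem mul_eq_of_hasDerivAt_apply_mul_right {T : ℝ → Matrix n n ℝ} (hT : Continuous T)
    {F : ℝ → ℝ → Matrix n n ℝ} (hF_self : ∀ t, F t t = 1)
    (hF : ∀ t u i j, HasDerivAt (fun v => F t v i j) ((F t u * T u) i j) u)
    (r s b : ℝ) (hsb : s ≤ b) : F r s * F s b = F r b :=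
  _root_.mul_eq_of_hasDerivAt_mul_right hT hF_self
    (fun t u => hasDerivAt_of_forall_hasDerivAt_apply (hF t u)) r s b hsb

end

end Matrix

theorem IPH_overshoot_general (n : ℕ) {Ω : Type*} [MeasureSpace Ω]
    (τ : Ω → ℝ) (π : Fin n → ℝ)
    (T : ℝ → Matrix (Fin n) (Fin n) ℝ) (hTc : Continuous T)
    (F : ℝ → ℝ → Matrix (Fin n) (Fin n) ℝ)
    (hFinit : ∀ t : ℝ, F t t = 1)
    (hFode : ∀ t s : ℝ, ∀ i j : Fin n,
      HasDerivAt (fun u => F t u i j) ((F t s * T s) i j) s)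
    (hsurv : ∀ x : ℝ, (ℙ {ω | x < τ ω}).toReal = π ⬝ᵥ (F 0 x *ᵥ fun _ => (1 : ℝ)))
    (s : ℝ) :
    ∀ t : ℝ, 0 ≤ t →
      (ℙ {ω | s + t < τ ω}).toReal / (ℙ {ω | s < τ ω}).toReal
        = (fun i => (π ᵥ* F 0 s) i / (π ⬝ᵥ (F 0 s *ᵥ fun _ => (1 : ℝ))))
            ⬝ᵥ (F s (s + t) *ᵥ fun _ => (1 : ℝ)) := by
  intro t ht
  have hsemigroup : F 0 s * F s (s + t) = F 0 (s + t) :=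
    mul_eq_of_hasDerivAt_apply_mul_right hTc hFinit hFode 0 s (s + t) (by linarith)
  rw [hsurv, hsurv, ← hsemigroup, ← mulVec_mulVec, dotProduct_mulVec π (F 0 s)]
  simp only [dotProduct, div_mul_eq_mul_div, ← Finset.sum_div]

/-- Overshoot property of inhomogeneous phase-type distributions: if τ has survival
function x ↦ π F(0,x) 1, then P(τ > s+t | τ > s) = α(s) F(s,s+t) 1 where
α(s) = π F(0,s) / (π F(0,s) 1); i.e. the overshoot is again IPH(α(s), T(s+·)). -/
theorem IPH_overshoot (n : ℕ) {Ω : Type*} [MeasureSpace Ω]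
    [IsProbabilityMeasure (ℙ : Measure Ω)]
    (τ : Ω → ℝ) (π : Fin n → ℝ) (hπ0 : ∀ i, 0 ≤ π i) (hπ1 : ∑ i, π i = 1)
    (T : ℝ → Matrix (Fin n) (Fin n) ℝ) (hTc : Continuous T)
    (hoff : ∀ x : ℝ, ∀ i j : Fin n, i ≠ j → 0 ≤ T x i j)
    (hrow : ∀ x : ℝ, ∀ i : Fin n, ∑ j, T x i j ≤ 0)
    (F : ℝ → ℝ → Matrix (Fin n) (Fin n) ℝ)
    (hFinit : ∀ t : ℝ, F t t = 1)
    (hFode : ∀ t s : ℝ, ∀ i j : Fin n,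
      HasDerivAt (fun u => F t u i j) ((F t s * T s) i j) s)
    (hsurv : ∀ x : ℝ, (ℙ {ω | x < τ ω}).toReal = π ⬝ᵥ (F 0 x *ᵥ fun _ => (1 : ℝ)))
    (s : ℝ) (hs : 0 ≤ s)
    (hpos : 0 < π ⬝ᵥ (F 0 s *ᵥ fun _ => (1 : ℝ))) :
    ∀ t : ℝ, 0 ≤ t →
      (ℙ {ω | s + t < τ ω}).toReal / (ℙ {ω | s < τ ω}).toReal
        = (fun i => (π ᵥ* F 0 s) i / (π ⬝ᵥ (F 0 s *ᵥ fun _ => (1 : ℝ))))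
            ⬝ᵥ (F s (s + t) *ᵥ fun _ => (1 : ℝ)) :=
  IPH_overshoot_general n τ π T hTc F hFinit hFode hsurv s
end

section
/- Let T : ℝ → Matrix (Fin n) (Fin n) ℝ be a continuous sub-intensity matrix function with exit rate vector t(x) = −T(x)·1, let π be a probability row vector, and let F be the product integral of T. Assume x ↦ π·F(0,x)·1 tends to 0 as x → ∞. Then the function f(x) = π · F(0,x) · t(x) is the density of the distribution with survival function x ↦ π·F(0,x)·1 on [0,∞); that is, ∫_0^y f(x) dx = 1 − π·F(0,y)·1 for all y ≥ 0. -/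
open Matrix

/-!
The survival function `S x = π F(0,x) 1` has derivative `π F(0,x) T(x) 1 = -π F(0,x) t(x)` by the
forward equation, so the fundamental theorem of calculus gives `∫₀^y π F(0,x) t(x) dx = S 0 - S y`,
and `S 0 = π 1 = 1` since `F(0,0) = I`.
-/

theorem hasDerivAt_dotProduct_mulVec {m n : Type*} [Fintype m] [Fintype n]
    {A : ℝ → Matrix m n ℝ} {A' : Matrix m n ℝ} {x : ℝ}
    (hA : ∀ i j, HasDerivAt (fun u => A u i j) (A' i j) x) (w : m → ℝ) (v : n → ℝ) :
    HasDerivAt (fun u => w ⬝ᵥ (A u *ᵥ v)) (w ⬝ᵥ (A' *ᵥ v)) x := by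
  simp only [dotProduct, mulVec]
  exact HasDerivAt.fun_sum fun i _ =>
    (HasDerivAt.fun_sum fun j _ => (hA i j).mul_const (v j)).const_mul (w i)

theorem continuous_of_hasDerivAt_entries {m n : Type*} {A A' : ℝ → Matrix m n ℝ}
    (hA : ∀ x i j, HasDerivAt (fun u => A u i j) (A' x i j) x) : Continuous A :=
  continuous_pi fun i => continuous_pi fun j =>
    continuous_iff_continuousAt.2 fun x => (hA x i j).continuousAt

theorem integral_dotProduct_mulVec_neg_generator {m : Type*} [Fintype m]
    {T F : ℝ → Matrix m m ℝ} (hT : Continuous T)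
    (hF : ∀ x i j, HasDerivAt (fun u => F u i j) ((F x * T x) i j) x) (w v : m → ℝ) (a b : ℝ) :
    ∫ x in a..b, w ⬝ᵥ (F x *ᵥ ((-T x) *ᵥ v)) = w ⬝ᵥ (F a *ᵥ v) - w ⬝ᵥ (F b *ᵥ v) := by
  have hderiv : ∀ x, HasDerivAt (fun u => -(w ⬝ᵥ (F u *ᵥ v)))
      (w ⬝ᵥ (F x *ᵥ ((-T x) *ᵥ v))) x := fun x => by
    simpa only [← mulVec_mulVec, neg_mulVec, mulVec_neg, dotProduct_neg]
      using (hasDerivAt_dotProduct_mulVec (hF x) w v).fun_neg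
  have hcont : Continuous fun x => w ⬝ᵥ (F x *ᵥ ((-T x) *ᵥ v)) :=
    continuous_const.dotProduct <| (continuous_of_hasDerivAt_entries hF).matrix_mulVec <|
      hT.neg.matrix_mulVec continuous_const
  rw [intervalIntegral.integral_eq_sub_of_hasDerivAt (fun x _ => hderiv x)
    (hcont.intervalIntegrable a b)]
  ring

theorem IPH_density_general (n : ℕ) (T : ℝ → Matrix (Fin n) (Fin n) ℝ) (hTc : Continuous T)
    (π : Fin n → ℝ) (hπ1 : ∑ i, π i = 1)
    (F : ℝ → ℝ → Matrix (Fin n) (Fin n) ℝ)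
    (hFinit : ∀ t : ℝ, F t t = 1)
    (hFode : ∀ t s : ℝ, ∀ i j : Fin n,
      HasDerivAt (fun u => F t u i j) ((F t s * T s) i j) s) :
    ∀ y : ℝ, 0 ≤ y →
      (∫ x in (0 : ℝ)..y, π ⬝ᵥ (F 0 x *ᵥ ((-T x) *ᵥ fun _ => (1 : ℝ))))
        = 1 - π ⬝ᵥ (F 0 y *ᵥ fun _ => (1 : ℝ)) := by
  intro y _
  rw [integral_dotProduct_mulVec_neg_generator hTc (hFode 0), hFinit, one_mulVec]
  simpa [dotProduct] using hπ1

/-- The function f(x) = π F(0,x) t(x), with exit rate vector t(x) = -T(x)·1, is the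
density of the IPH distribution with survival function x ↦ π F(0,x) 1:
∫_0^y f(x) dx = 1 - π F(0,y) 1 for y ≥ 0. -/
theorem IPH_density (n : ℕ) (T : ℝ → Matrix (Fin n) (Fin n) ℝ) (hTc : Continuous T)
    (hoff : ∀ x : ℝ, ∀ i j : Fin n, i ≠ j → 0 ≤ T x i j)
    (hrow : ∀ x : ℝ, ∀ i : Fin n, ∑ j, T x i j ≤ 0)
    (π : Fin n → ℝ) (hπ0 : ∀ i, 0 ≤ π i) (hπ1 : ∑ i, π i = 1)
    (F : ℝ → ℝ → Matrix (Fin n) (Fin n) ℝ)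
    (hFinit : ∀ t : ℝ, F t t = 1)
    (hFode : ∀ t s : ℝ, ∀ i j : Fin n,
      HasDerivAt (fun u => F t u i j) ((F t s * T s) i j) s)
    (htail : Filter.Tendsto (fun x => π ⬝ᵥ (F 0 x *ᵥ fun _ => (1 : ℝ)))
      Filter.atTop (nhds 0)) :
    ∀ y : ℝ, 0 ≤ y →
      (∫ x in (0 : ℝ)..y, π ⬝ᵥ (F 0 x *ᵥ ((-T x) *ᵥ fun _ => (1 : ℝ))))
        = 1 - π ⬝ᵥ (F 0 y *ᵥ fun _ => (1 : ℝ)) :=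
  IPH_density_general n T hTc π hπ1 F hFinit hFode
end

section
/- Let M be an intensity matrix function on the product state space E with block structure, let F_M(t,s) be its product integral and F_{jj}(t,s) the product integral of the diagonal block M_{jj}. Define E_j as the |E| × d_j matrix embedding the j-th block (identity in block row j, zeros elsewhere). Then for t ≤ r ≤ s, the matrix-valued function G(t,s) := F_M(t,r) E_j F_{jj}(r,s) satisfies: all entries of G are nonnegative, and e'_{(i,ĩ)} G(t,s) e_{j̃} ≤ 1 for every microstate (i,ĩ) and every j̃ ∈ Fin d_j. -/
open Matrix Finset Filter

/-!
Both propagators are substochastic. For a solution of `F' = F A` with `A` Metzler, an entry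
`F_ik` sitting at zero while the others are nonnegative has derivative `∑_{l ≠ k} F_il A_lk ≥ 0`,
so (after a small exponential perturbation making this strict) no entry can become negative;
then the row sums of `F` decrease, since those of `A` are `≤ 0`. This applies to `M` and to its
diagonal block `M_jj`, whose row sums are `≤ 0` because the dropped entries are off-diagonal.
As `E_j` is substochastic as well and substochastic matrices are closed under products, the
entries of `G` lie in `[0, 1]`.
-/

namespace Matrix

section Substochastic

variable {R : Type*} [Semiring R] {l m n : Type*} [Fintype n]

lemma sum_mul_apply [Fintype m] (P : Matrix l m R) (Q : Matrix m n R) (i : l) :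
    ∑ k, (P * Q) i k = ∑ j, P i j * ∑ k, Q j k := by
  simp only [mul_apply, Finset.mul_sum]
  exact Finset.sum_comm

variable [PartialOrder R] [IsOrderedRing R]

def IsSubstochastic (P : Matrix m n R) : Prop :=
  (∀ i k, 0 ≤ P i k) ∧ ∀ i, ∑ k, P i k ≤ 1

lemma IsSubstochastic.le_one {P : Matrix m n R} (hP : IsSubstochastic P) (i : m) (k : n) :
    P i k ≤ 1 :=
  (Finset.single_le_sum (fun k _ => hP.1 i k) (mem_univ k)).trans (hP.2 i)

lemma IsSubstochastic.mul [Fintype m] {P : Matrix l m R} {Q : Matrix m n R} (hP : IsSubstochastic P)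
    (hQ : IsSubstochastic Q) : IsSubstochastic (P * Q) := by
  refine ⟨fun i k => Finset.sum_nonneg fun j _ => mul_nonneg (hP.1 i j) (hQ.1 j k), fun i => ?_⟩
  calc ∑ k, (P * Q) i k = ∑ j, P i j * ∑ k, Q j k := sum_mul_apply P Q i
    _ ≤ ∑ j, P i j := Finset.sum_le_sum fun j _ => mul_le_of_le_one_right (hP.1 i j) (hQ.2 j)
    _ ≤ 1 := hP.2 i

lemma isSubstochastic_of_injective [DecidableEq m] {f : n → m} (hf : Function.Injective f) :
    IsSubstochastic (of fun e a => if e = f a then (1 : R) else 0) := by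
  refine ⟨fun e a => by simp only [of_apply]; split_ifs <;> simp, fun e => ?_⟩
  simp only [of_apply, Finset.sum_boole]
  have hcard : #{a | e = f a} ≤ 1 := Finset.card_le_one.2 fun a ha b hb => by
    simp only [Finset.mem_filter, mem_univ, true_and] at ha hb
    exact hf (ha.symm.trans hb)
  exact (Nat.mono_cast hcard).trans_eq Nat.cast_one

end Substochastic

section SubIntensity

variable {R : Type*} [AddCommMonoid R] [PartialOrder R] [IsOrderedAddMonoid R] {m n : Type*}
  [Fintype m] [Fintype n]

def IsSubIntensity (A : Matrix n n R) : Prop :=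
  (∀ i k, i ≠ k → 0 ≤ A i k) ∧ ∀ i, ∑ k, A i k ≤ 0

lemma IsSubIntensity.submatrix {A : Matrix n n R} (hA : IsSubIntensity A) {f : m → n}
    (hf : Function.Injective f) : IsSubIntensity (A.submatrix f f) := by
  classical
  refine ⟨fun i k hik => hA.1 _ _ (hf.ne hik), fun i => ?_⟩
  calc ∑ k, A.submatrix f f i k = ∑ x ∈ univ.image f, A (f i) x :=
        (Finset.sum_image fun a _ b _ h => hf h).symm
    _ ≤ ∑ x, A (f i) x := Finset.sum_le_sum_of_subset_of_nonneg (subset_univ _)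
        fun x _ hx => hA.1 _ _ fun h => hx (h ▸ mem_image_of_mem f (mem_univ i))
    _ ≤ 0 := hA.2 (f i)

end SubIntensity

end Matrix

lemma nonneg_of_hasDerivAt_pos_of_eq_zero {ι : Type*} [Finite ι] {h h' : ι → ℝ → ℝ} {t s : ℝ}
    (hderiv : ∀ i u, HasDerivAt (h i) (h' i u) u) (hinit : ∀ i, 0 ≤ h i t)
    (hboundary : ∀ u ∈ Set.Ico t s, (∀ k, 0 ≤ h k u) → ∀ i, h i u = 0 → 0 < h' i u) :
    ∀ u ∈ Set.Icc t s, ∀ i, 0 ≤ h i u := by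
  set S := {u | ∀ i, 0 ≤ h i u}
  have hS : IsClosed S := by
    simp only [S, Set.ofPred_forall]
    exact isClosed_iInter fun i => isClosed_le continuous_const
      (continuous_iff_continuousAt.2 fun u => (hderiv i u).continuousAt)
  refine fun u hu => (hS.inter isClosed_Icc).Icc_subset_of_forall_mem_nhdsWithin hinit ?_ hu
  rintro u ⟨hu, hut⟩
  refine eventually_all.2 fun i => ?_
  rcases (hu i).lt_or_eq with hpos | hzero
  · exact ((hderiv i u).continuousAt.eventually (lt_mem_nhds hpos)).filter_mono
      nhdsWithin_le_nhds |>.mono fun _ => le_of_lt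
  · have hslope := ((hderiv i u).tendsto_slope.mono_left (nhdsGT_le_nhdsNE u)).eventually
      (eventually_gt_nhds (hboundary u hut hu i hzero.symm))
    filter_upwards [hslope, self_mem_nhdsWithin] with v hv huv
    exact (pos_of_slope_pos huv hv hzero.symm).le

section ForwardEquation

variable {n : Type*} [Fintype n] {A F : ℝ → Matrix n n ℝ}

lemma exists_sum_apply_lt_of_continuous (hA : Continuous A) (t s : ℝ) :
    ∃ K, ∀ u ∈ Set.Icc t s, ∀ k, ∑ l, A u l k < K := by
  have hcont : Continuous fun u k => ∑ l, A u l k :=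
    continuous_pi fun k => continuous_finsetSum _ fun l _ => hA.matrix_elem l k
  obtain ⟨C, hC⟩ := isCompact_Icc.exists_bound_of_continuousOn hcont.continuousOn
  refine ⟨C + 1, fun u hu k => ?_⟩
  have := (le_abs_self _).trans ((norm_le_pi_norm (fun k => ∑ l, A u l k) k).trans (hC u hu))
  linarith

/-- With `δ = ε e^{K(u-s)}` and `K` above every column sum of `A` on `[t, s]`, each entry of
`F + δ` that touches zero has derivative `∑_l (F_il + δ) A_lk + δ (K - ∑_l A_lk) > 0`. -/
lemma apply_nonneg_of_hasDerivAt (hA : Continuous A) (hoff : ∀ u i k, i ≠ k → 0 ≤ A u i k)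
    (hF : ∀ u i k, HasDerivAt (fun v => F v i k) ((F u * A u) i k) u) {t s : ℝ}
    (hFt : ∀ i k, 0 ≤ F t i k) (hts : t ≤ s) (i k : n) : 0 ≤ F s i k := by
  obtain ⟨K, hK⟩ := exists_sum_apply_lt_of_continuous hA t s
  refine le_of_forall_pos_le_add fun ε hε => ?_
  have hexp : ∀ u, HasDerivAt (fun v => ε * Real.exp (K * (v - s)))
      (ε * (Real.exp (K * (u - s)) * K)) u := fun u => by
    simpa using (((hasDerivAt_id u).sub_const s).const_mul K).exp.const_mul ε
  have key := nonneg_of_hasDerivAt_pos_of_eq_zero (ι := n × n) (t := t) (s := s)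
    (h := fun p v => F v p.1 p.2 + ε * Real.exp (K * (v - s)))
    (fun p u => (hF u p.1 p.2).add (hexp u))
    (fun p => add_nonneg (hFt p.1 p.2) (by positivity)) ?_ s ⟨hts, le_rfl⟩ (i, k)
  · simpa using key
  rintro u hu hnn ⟨i, k⟩ hzero
  set δ := ε * Real.exp (K * (u - s))
  have hδ : 0 < δ := by positivity
  have hH : 0 ≤ ∑ l, (F u i l + δ) * A u l k := Finset.sum_nonneg fun l _ => by
    rcases eq_or_ne l k with rfl | hlk
    · simp [show F u i l + δ = 0 from hzero]
    · exact mul_nonneg (hnn (i, l)) (hoff u l k hlk)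
  have hsplit : (F u * A u) i k = ∑ l, (F u i l + δ) * A u l k - δ * ∑ l, A u l k := by
    simp only [mul_apply, add_mul, Finset.sum_add_distrib, Finset.mul_sum]; ring
  have hcol := hK u (Set.Ico_subset_Icc_self hu) k
  show 0 < (F u * A u) i k + ε * (Real.exp (K * (u - s)) * K)
  rw [hsplit, ← mul_assoc]
  linarith [mul_pos hδ (sub_pos.2 hcol)]

lemma sum_apply_le_of_hasDerivAt (hrow : ∀ u i, ∑ k, A u i k ≤ 0)
    (hF : ∀ u i k, HasDerivAt (fun v => F v i k) ((F u * A u) i k) u) {t s : ℝ}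
    (hnn : ∀ u ∈ Set.Icc t s, ∀ i k, 0 ≤ F u i k) (hts : t ≤ s) (i : n) :
    ∑ k, F s i k ≤ ∑ k, F t i k := by
  have hsum : ∀ u, HasDerivAt (fun v => ∑ k, F v i k) (∑ l, F u i l * ∑ k, A u l k) u :=
    fun u => by simpa only [sum_mul_apply] using HasDerivAt.fun_sum (u := univ) fun k _ => hF u i k
  refine antitoneOn_of_hasDerivWithinAt_nonpos (convex_Icc t s)
    (fun u _ => (hsum u).continuousAt.continuousWithinAt) (fun u _ => (hsum u).hasDerivWithinAt)
    (fun u hu => ?_) ⟨le_rfl, hts⟩ ⟨hts, le_rfl⟩ hts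
  rw [interior_Icc] at hu
  exact Finset.sum_nonpos fun l _ =>
    mul_nonpos_of_nonneg_of_nonpos (hnn u (Set.Ioo_subset_Icc_self hu) i l) (hrow u l)

lemma isSubstochastic_of_hasDerivAt [DecidableEq n] (hA : Continuous A)
    (hsub : ∀ u, (A u).IsSubIntensity)
    (hF : ∀ u i k, HasDerivAt (fun v => F v i k) ((F u * A u) i k) u) {t s : ℝ}
    (hFt : F t = 1) (hts : t ≤ s) : (F s).IsSubstochastic := by
  have hnn : ∀ u ∈ Set.Icc t s, ∀ i k, 0 ≤ F u i k := fun u hu =>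
    apply_nonneg_of_hasDerivAt hA (fun u => (hsub u).1) hF (fun i k => hFt ▸ zero_le_one_elem i k)
      hu.1
  refine ⟨hnn s ⟨hts, le_rfl⟩, fun i => ?_⟩
  calc ∑ k, F s i k ≤ ∑ k, F t i k :=
        sum_apply_le_of_hasDerivAt (fun u => (hsub u).2) hF hnn hts i
    _ = 1 := by simp [hFt, one_apply]

end ForwardEquation

/-- For an intensity matrix function M on the aggregated state space E = Σ j, Fin (d j),
with F_M the product integral of M and F_jj that of the diagonal block M_jj, the matrix
G(t,s) = F_M(t,r) E_j F_jj(r,s) has nonnegative entries, all bounded by 1, for t ≤ r ≤ s. -/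
theorem aggregate_block_probability {J : Type*} [Fintype J] [DecidableEq J] (d : J → ℕ)
    (M : ℝ → Matrix ((j : J) × Fin (d j)) ((j : J) × Fin (d j)) ℝ)
    (hMc : Continuous M)
    (hoff : ∀ t : ℝ, ∀ e f : (j : J) × Fin (d j), e ≠ f → 0 ≤ M t e f)
    (hrow : ∀ t : ℝ, ∀ e : (j : J) × Fin (d j), ∑ f, M t e f = 0)
    (FM : ℝ → ℝ → Matrix ((j : J) × Fin (d j)) ((j : J) × Fin (d j)) ℝ)
    (hFMinit : ∀ t : ℝ, FM t t = 1)
    (hFMode : ∀ t s : ℝ, ∀ e f : (j : J) × Fin (d j),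
      HasDerivAt (fun u => FM t u e f) ((FM t s * M s) e f) s)
    (j : J)
    (Fjj : ℝ → ℝ → Matrix (Fin (d j)) (Fin (d j)) ℝ)
    (hFjjinit : ∀ t : ℝ, Fjj t t = 1)
    (hFjjode : ∀ t s : ℝ, ∀ a b : Fin (d j),
      HasDerivAt (fun u => Fjj t u a b)
        ((Fjj t s * Matrix.of fun a' b' => M s ⟨j, a'⟩ ⟨j, b'⟩) a b) s)
    (Ej : Matrix ((j : J) × Fin (d j)) (Fin (d j)) ℝ)
    (hEj : Ej = Matrix.of fun e a => if e = ⟨j, a⟩ then (1 : ℝ) else 0)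
    (t r s : ℝ) (htr : t ≤ r) (hrs : r ≤ s) :
    (∀ (e : (j : J) × Fin (d j)) (a : Fin (d j)), 0 ≤ (FM t r * Ej * Fjj r s) e a)
    ∧ ∀ (e : (j : J) × Fin (d j)) (a : Fin (d j)), (FM t r * Ej * Fjj r s) e a ≤ 1 := by
  have hM : ∀ u, (M u).IsSubIntensity := fun u => ⟨hoff u, fun e => (hrow u e).le⟩
  have hFM : (FM t r).IsSubstochastic :=
    isSubstochastic_of_hasDerivAt hMc hM (hFMode t) (hFMinit t) htr
  have hFjj : (Fjj r s).IsSubstochastic :=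
    isSubstochastic_of_hasDerivAt (hMc.matrix_submatrix (Sigma.mk j) (Sigma.mk j))
      (fun u => (hM u).submatrix sigma_mk_injective) (hFjjode r) (hFjjinit r) hrs
  have hEjsub : Ej.IsSubstochastic := hEj ▸ isSubstochastic_of_injective sigma_mk_injective
  have hG := (hFM.mul hEjsub).mul hFjj
  exact ⟨hG.1, hG.le_one⟩
end
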